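/- Under the curvature symmetry hypotheses on A and B, the second-order term in the expansion of the gradient energy of the bubble vanishes: ∫_{ℝⁿ₊} Σ_{i,j=1}^{n−1} [ (1/3) Σ_{k,l=1}^{n−1} A_{ikjl} x_k x_l + B_{ij} xₙ² ] ∂ᵢU(x) ∂ⱼU(x) dx = 0, the integrand being absolutely integrable. -/

import Mathlib

noncomputable section

open Real MeasureTheory

/-- Points of `ℝⁿ` written as `(x̃, xₙ)` with `x̃ ∈ ℝ^{n-1}`. -/
abbrev Pt (n : ℕ) : Type := (Fin (n - 1) → ℝ) × ℝ

/-- Squared Euclidean norm of the tangential part `x̃`. -/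
def nsqT {m : ℕ} (y : Fin m → ℝ) : ℝ := ∑ i, (y i) ^ 2

/-- Tangential partial derivative `∂ᵢ`, `i = 1, …, n-1`. -/
def pdT {n : ℕ} (i : Fin (n - 1)) (f : Pt n → ℝ) (x : Pt n) : ℝ :=
  fderiv ℝ f x (Pi.single i 1, 0)

/-- Normal partial derivative `∂ₙ`. -/
def pdN {n : ℕ} (f : Pt n → ℝ) (x : Pt n) : ℝ :=
  fderiv ℝ f x (0, 1)

/-- Euclidean Laplacian `Δ = Σᵢ ∂ᵢᵢ + ∂ₙₙ`. -/
def lap {n : ℕ} (f : Pt n → ℝ) (x : Pt n) : ℝ :=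
  (∑ i, pdT i (pdT i f) x) + pdN (pdN f) x

/-- The standard bubble
`U(x) = αₙ |K|^{-(n-2)/4} (|x̃|² + (xₙ + 𝔇)² - 1)^{-(n-2)/2}`. -/
def bubble (n : ℕ) (K D : ℝ) (x : Pt n) : ℝ :=
  (4 * (n : ℝ) * ((n : ℝ) - 1)) ^ (((n : ℝ) - 2) / 4) * |K| ^ (-(((n : ℝ) - 2) / 4)) *
    (nsqT x.1 + (x.2 + D) ^ 2 - 1) ^ (-(((n : ℝ) - 2) / 2))

/-!
The bubble is `U = c wᵖ` with `w = |x̃|² + (xₙ + 𝔇)² - 1 > 0` on the half-space, so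
`∂ᵢU = xᵢ ρ` with `ρ = 2cp w^{p-1}` depending on `x̃` only through `|x̃|²`. The integrand is
therefore `ρ² Σᵢⱼ [⅓ Σₖₗ Aᵢₖⱼₗ xᵢxₖxⱼxₗ + Bᵢⱼ xₙ² xᵢxⱼ]`. The `A`-part vanishes pointwise,
since `Aᵢₖⱼₗ` is antisymmetric in `(i, k)` while `xᵢxₖ` is symmetric. In the `B`-part,
the reflection `xᵢ ↦ -xᵢ` kills the off-diagonal integrals and transpositions of
coordinates make the diagonal ones equal, leaving `(Σᵢ Bᵢᵢ) ∫ x₁² xₙ² ρ² = 0`.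
Integrability: on `xₙ > 0` we have `w ≥ (𝔇² - 1) + |x|²`, so the integrand is
`O((1 + |x|²)^{2-n})`, integrable on `ℝⁿ` exactly when `n ≥ 5`.
-/

section Algebra

variable {ι : Type*} [Fintype ι]

theorem sum_sum_eq_zero_of_antisymm (g : ι → ι → ℝ) (hg : ∀ i k, g i k = -g k i) :
    ∑ i, ∑ k, g i k = 0 := by
  have h : ∑ i, ∑ k, g i k = -∑ i, ∑ k, g i k := by
    conv_lhs => rw [Finset.sum_comm]
    simp only [← Finset.sum_neg_distrib]
    exact Finset.sum_congr rfl fun k _ => Finset.sum_congr rfl fun i _ => hg i k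
  linarith

theorem sum_curvature_mul_eq_zero (A : ι → ι → ι → ι → ℝ)
    (hA : ∀ i k j l, A i k j l = -A k i j l) (y : ι → ℝ) :
    ∑ i, ∑ j, (∑ k, ∑ l, A i k j l * y k * y l) * (y i * y j) = 0 := by
  have h (i j : ι) : (∑ k, ∑ l, A i k j l * y k * y l) * (y i * y j) =
      ∑ k, ∑ l, A i k j l * y i * y k * (y j * y l) := by
    simp only [Finset.sum_mul]
    exact Finset.sum_congr rfl fun k _ => Finset.sum_congr rfl fun l _ => by ring
  simp only [h]
  rw [Finset.sum_congr rfl fun i _ => Finset.sum_comm]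
  refine sum_sum_eq_zero_of_antisymm _ fun i k => ?_
  rw [← Finset.sum_neg_distrib]
  refine Finset.sum_congr rfl fun j _ => ?_
  rw [← Finset.sum_neg_distrib]
  refine Finset.sum_congr rfl fun l _ => ?_
  rw [hA i k j l]; ring

theorem sum_gradient_form_eq (A : ι → ι → ι → ι → ℝ)
    (hA : ∀ i k j l, A i k j l = -A k i j l) (B : ι → ι → ℝ) (y : ι → ℝ) (t g : ℝ) :
    ∑ i, ∑ j, ((1 / 3) * (∑ k, ∑ l, A i k j l * y k * y l) + B i j * t) * (y i * g) * (y j * g)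
      = ∑ i, ∑ j, B i j * (y i * y j * (t * g ^ 2)) := by
  have h (i j : ι) :
      ((1 / 3) * (∑ k, ∑ l, A i k j l * y k * y l) + B i j * t) * (y i * g) * (y j * g) =
        g ^ 2 / 3 * ((∑ k, ∑ l, A i k j l * y k * y l) * (y i * y j)) +
          B i j * (y i * y j * (t * g ^ 2)) := by
    ring
  simp only [h, Finset.sum_add_distrib, ← Finset.mul_sum, sum_curvature_mul_eq_zero A hA y,
    mul_zero, zero_add]

end Algebra

def bubbleBase (D r t : ℝ) : ℝ := r + (t + D) ^ 2 - 1

def bubbleConst (n : ℕ) (K : ℝ) : ℝ :=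
  (4 * (n : ℝ) * ((n : ℝ) - 1)) ^ (((n : ℝ) - 2) / 4) * |K| ^ (-(((n : ℝ) - 2) / 4))

def bubbleExp (n : ℕ) : ℝ := -(((n : ℝ) - 2) / 2)

def bubbleRadialDeriv (n : ℕ) (K D r t : ℝ) : ℝ :=
  2 * bubbleConst n K * bubbleExp n * bubbleBase D r t ^ (bubbleExp n - 1)

def bubbleWeight (n : ℕ) (K D r t : ℝ) : ℝ := t ^ 2 * bubbleRadialDeriv n K D r t ^ 2

theorem bubble_eq (n : ℕ) (K D : ℝ) :
    bubble n K D = fun x => bubbleConst n K * bubbleBase D (nsqT x.1) x.2 ^ bubbleExp n := rfl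

theorem hasFDerivAt_nsqT {m : ℕ} (y : Fin m → ℝ) :
    HasFDerivAt nsqT
      (∑ k, (2 * y k) • ContinuousLinearMap.proj (R := ℝ) (φ := fun _ => ℝ) k) y := by
  unfold nsqT
  refine HasFDerivAt.fun_sum fun k _ => ?_
  simpa using (hasFDerivAt_apply (𝕜 := ℝ) k y).pow 2

theorem pdT_bubble {n : ℕ} (K D : ℝ) (i : Fin (n - 1)) {x : Pt n}
    (hx : bubbleBase D (nsqT x.1) x.2 ≠ 0) :
    pdT i (bubble n K D) x = x.1 i * bubbleRadialDeriv n K D (nsqT x.1) x.2 := by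
  have hbase : HasFDerivAt (fun x : Pt n => bubbleBase D (nsqT x.1) x.2)
      ((∑ k, (2 * x.1 k) • ContinuousLinearMap.proj k).comp (ContinuousLinearMap.fst ℝ _ ℝ) +
        (2 * (x.2 + D)) • ContinuousLinearMap.snd ℝ _ ℝ) x := by
    unfold bubbleBase
    have h1 := (hasFDerivAt_nsqT x.1).comp x hasFDerivAt_fst
    have h2 := ((hasFDerivAt_snd (𝕜 := ℝ) (p := x)).add_const D).pow 2
    exact ((h1.add h2).sub_const 1).congr_fderiv (by norm_num [mul_add])
  rw [bubble_eq, pdT, ((hbase.rpow_const (Or.inl hx)).const_mul _).fderiv]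
  simp only [smul_apply, add_apply,
    ContinuousLinearMap.comp_apply, ContinuousLinearMap.coe_fst', sum_apply,
    ContinuousLinearMap.proj_apply, ContinuousLinearMap.coe_snd', Pi.single_apply, smul_eq_mul,
    mul_ite, mul_one, mul_zero, Finset.sum_ite_eq', Finset.mem_univ, if_true, add_zero,
    bubbleRadialDeriv]
  ring

section Symmetry

variable {m : ℕ} {β : Type*} [MeasurableSpace β] {ν : Measure β} [SFinite ν]

def reflectCoord (i : Fin m) : (Fin m → ℝ) ≃ᵐ (Fin m → ℝ) :=
  MeasurableEquiv.piCongrRight fun k =>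
    if k = i then MeasurableEquiv.neg ℝ else MeasurableEquiv.refl ℝ

theorem reflectCoord_apply_self (i : Fin m) (y : Fin m → ℝ) : reflectCoord i y i = -y i := by
  simp [reflectCoord, MeasurableEquiv.piCongrRight]

theorem reflectCoord_apply_of_ne {i k : Fin m} (hk : k ≠ i) (y : Fin m → ℝ) :
    reflectCoord i y k = y k := by
  simp [reflectCoord, MeasurableEquiv.piCongrRight, hk]

theorem nsqT_reflectCoord (i : Fin m) (y : Fin m → ℝ) : nsqT (reflectCoord i y) = nsqT y := by
  refine Finset.sum_congr rfl fun k _ => ?_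
  rcases eq_or_ne k i with rfl | hk
  · rw [reflectCoord_apply_self, neg_sq]
  · rw [reflectCoord_apply_of_ne hk]

theorem measurePreserving_reflectCoord (i : Fin m) : MeasurePreserving (reflectCoord i) := by
  refine volume_preserving_pi fun k => ?_
  by_cases hk : k = i
  · simpa [hk] using Measure.measurePreserving_neg (volume : Measure ℝ)
  · simpa [hk] using MeasurePreserving.id (volume : Measure ℝ)

theorem integral_comp_prodMap_fst {e : (Fin m → ℝ) ≃ᵐ (Fin m → ℝ)} (he : MeasurePreserving e)
    (f : (Fin m → ℝ) × β → ℝ) :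
    ∫ x, f (e x.1, x.2) ∂(volume.prod ν) = ∫ x, f x ∂(volume.prod ν) :=
  (he.prod (MeasurePreserving.id ν)).integral_comp' (f := e.prodCongr (MeasurableEquiv.refl β)) f

theorem integral_coord_mul_coord_of_ne (φ : ℝ → β → ℝ) {i j : Fin m} (hij : i ≠ j) :
    ∫ x : (Fin m → ℝ) × β, x.1 i * x.1 j * φ (nsqT x.1) x.2 ∂(volume.prod ν) = 0 := by
  have h := integral_comp_prodMap_fst (ν := ν) (measurePreserving_reflectCoord i)
    fun x => x.1 i * x.1 j * φ (nsqT x.1) x.2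
  simp only [reflectCoord_apply_self, reflectCoord_apply_of_ne hij.symm, nsqT_reflectCoord,
    neg_mul, integral_neg] at h
  linarith

theorem integral_coord_sq_eq (φ : ℝ → β → ℝ) (i j : Fin m) :
    ∫ x : (Fin m → ℝ) × β, x.1 i * x.1 i * φ (nsqT x.1) x.2 ∂(volume.prod ν) =
      ∫ x : (Fin m → ℝ) × β, x.1 j * x.1 j * φ (nsqT x.1) x.2 ∂(volume.prod ν) := by
  let e := MeasurableEquiv.arrowCongr' (Equiv.swap i j) (MeasurableEquiv.refl ℝ)
  have he : MeasurePreserving e :=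
    volume_preserving_arrowCongr' _ _ (MeasurePreserving.id volume)
  have hnsq (y : Fin m → ℝ) : nsqT (e y) = nsqT y :=
    (Equiv.swap i j).symm.sum_comp fun k => y k ^ 2
  have h := integral_comp_prodMap_fst (ν := ν) he fun x => x.1 i * x.1 i * φ (nsqT x.1) x.2
  have happ (y : Fin m → ℝ) : e y i = y j := by
    simp [e, MeasurableEquiv.arrowCongr', Equiv.arrowCongr']
  simp only [happ, hnsq] at h
  exact h.symm

theorem sum_mul_integral_coord_mul_coord_eq_zero (φ : ℝ → β → ℝ) (B : Fin m → Fin m → ℝ)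
    (hB : ∑ i, B i i = 0) :
    ∑ i, ∑ j, B i j * ∫ x : (Fin m → ℝ) × β, x.1 i * x.1 j * φ (nsqT x.1) x.2 ∂(volume.prod ν) =
      0 := by
  rcases isEmpty_or_nonempty (Fin m) with hm | ⟨⟨i₀⟩⟩
  · simp
  have hrow (i : Fin m) :
      ∑ j, B i j * ∫ x : (Fin m → ℝ) × β, x.1 i * x.1 j * φ (nsqT x.1) x.2 ∂(volume.prod ν) =
        B i i * ∫ x : (Fin m → ℝ) × β, x.1 i₀ * x.1 i₀ * φ (nsqT x.1) x.2 ∂(volume.prod ν) := by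
    rw [Finset.sum_eq_single i (fun j _ hji => by rw [integral_coord_mul_coord_of_ne φ hji.symm,
      mul_zero]) (by simp), integral_coord_sq_eq φ i i₀]
  rw [Finset.sum_congr rfl fun i _ => hrow i, ← Finset.sum_mul, hB, zero_mul]

end Symmetry

theorem nsqT_nonneg {m : ℕ} (y : Fin m → ℝ) : 0 ≤ nsqT y :=
  Finset.sum_nonneg fun _ _ => sq_nonneg _

theorem sq_norm_le_nsqT {m : ℕ} (y : Fin m → ℝ) : ‖y‖ ^ 2 ≤ nsqT y := by
  have hle : ‖y‖ ≤ √(nsqT y) := by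
    refine (pi_norm_le_iff_of_nonneg (Real.sqrt_nonneg _)).mpr fun k => ?_
    rw [Real.norm_eq_abs, Real.le_sqrt (abs_nonneg _) (nsqT_nonneg y), sq_abs]
    exact Finset.single_le_sum (f := fun k => y k ^ 2) (fun _ _ => sq_nonneg _)
      (Finset.mem_univ k)
  calc ‖y‖ ^ 2 ≤ √(nsqT y) ^ 2 := pow_le_pow_left₀ (norm_nonneg _) hle 2
    _ = nsqT y := Real.sq_sqrt (nsqT_nonneg y)

theorem sq_norm_le_nsqT_add_sq {n : ℕ} (x : Pt n) : ‖x‖ ^ 2 ≤ nsqT x.1 + x.2 ^ 2 := by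
  have h1 := sq_norm_le_nsqT x.1
  rcases max_cases ‖x.1‖ ‖x.2‖ with ⟨h, _⟩ | ⟨h, _⟩ <;> rw [Prod.norm_def, h]
  · nlinarith [sq_nonneg x.2]
  · rw [Real.norm_eq_abs, sq_abs]
    nlinarith [nsqT_nonneg x.1]

theorem sub_one_add_sq_norm_le_bubbleBase {n : ℕ} {D : ℝ} (hD : 1 < D) {x : Pt n} (hx : 0 < x.2) :
    D ^ 2 - 1 + ‖x‖ ^ 2 ≤ bubbleBase D (nsqT x.1) x.2 := by
  have := sq_norm_le_nsqT_add_sq x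
  unfold bubbleBase
  nlinarith [mul_pos hx (zero_lt_one.trans hD)]

theorem volume_restrict_snd_pos {α : Type*} [MeasureSpace α] [SigmaFinite (volume : Measure α)] :
    (volume : Measure (α × ℝ)).restrict {x | 0 < x.2} =
      (volume : Measure α).prod (volume.restrict (Set.Ioi 0)) := by
  rw [← Measure.restrict_univ (μ := (volume : Measure α)), Measure.prod_restrict]
  congr 1
  ext x
  simp

theorem abs_coord_mul_coord_mul_bubbleWeight_le {n : ℕ} (K : ℝ) {D : ℝ} (hD : 1 < D)
    (i j : Fin (n - 1)) {x : Pt n} (hx : 0 < x.2) :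
    |x.1 i * x.1 j * bubbleWeight n K D (nsqT x.1) x.2| ≤
      (2 * bubbleConst n K * bubbleExp n * bubbleBase D (nsqT x.1) x.2 ^ bubbleExp n) ^ 2 := by
  set w := bubbleBase D (nsqT x.1) x.2
  set c := 2 * bubbleConst n K * bubbleExp n
  have hw := sub_one_add_sq_norm_le_bubbleBase hD hx
  have hε : 0 < D ^ 2 - 1 := by nlinarith
  have hxw : ‖x‖ ^ 2 ≤ w := by linarith
  have hwpos : 0 < w := by linarith [sq_nonneg ‖x‖]
  have hi : |x.1 i| ≤ ‖x‖ := (norm_le_pi_norm x.1 i).trans (norm_fst_le x)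
  have hj : |x.1 j| ≤ ‖x‖ := (norm_le_pi_norm x.1 j).trans (norm_fst_le x)
  have ht : x.2 ^ 2 ≤ ‖x‖ ^ 2 := by
    rw [← sq_abs]; exact pow_le_pow_left₀ (abs_nonneg _) (norm_snd_le x) 2
  have hpow : w * w ^ (bubbleExp n - 1) = w ^ bubbleExp n := by
    rw [Real.rpow_sub_one hwpos.ne']; field_simp
  calc |x.1 i * x.1 j * (x.2 ^ 2 * (c * w ^ (bubbleExp n - 1)) ^ 2)|
      = |x.1 i| * |x.1 j| * x.2 ^ 2 * (c * w ^ (bubbleExp n - 1)) ^ 2 := by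
        rw [abs_mul, abs_mul,
          abs_of_nonneg (show 0 ≤ x.2 ^ 2 * (c * w ^ (bubbleExp n - 1)) ^ 2 by positivity)]
        ring
    _ ≤ ‖x‖ * ‖x‖ * ‖x‖ ^ 2 * (c * w ^ (bubbleExp n - 1)) ^ 2 := by gcongr
    _ ≤ w * w * (c * w ^ (bubbleExp n - 1)) ^ 2 := by
        gcongr
        nlinarith [norm_nonneg x]
    _ = (c * w ^ bubbleExp n) ^ 2 := by rw [← hpow]; ring

theorem integrable_one_add_sq_norm_rpow_bubbleExp_sq {n : ℕ} (hn : 5 ≤ n) :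
    Integrable fun x : Pt n => ((1 + ‖x‖ ^ 2) ^ bubbleExp n) ^ 2 := by
  have : (volume : Measure (Pt n)).IsAddHaarMeasure :=
    inferInstanceAs ((volume : Measure (Fin (n - 1) → ℝ)).prod volume).IsAddHaarMeasure
  have hn' : (5 : ℝ) ≤ n := by exact_mod_cast hn
  have hdim : (Module.finrank ℝ (Pt n) : ℝ) < 2 * n - 4 := by
    have : Module.finrank ℝ (Pt n) = n := by simp; omega
    rw [this]
    linarith
  refine (integrable_rpow_neg_one_add_norm_sq hdim).congr (.of_forall fun x => ?_)
  dsimp only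
  rw [← Real.rpow_mul_natCast (by positivity)]
  congr 1
  simp only [bubbleExp]; push_cast; ring

theorem integrableOn_coord_mul_coord_mul_bubbleWeight {n : ℕ} (hn : 5 ≤ n) (K : ℝ) {D : ℝ}
    (hD : 1 < D) (i j : Fin (n - 1)) :
    IntegrableOn
      (fun x : Pt n => x.1 i * x.1 j * bubbleWeight n K D (nsqT x.1) x.2) {x | 0 < x.2} := by
  set p := bubbleExp n
  set c := 2 * bubbleConst n K * p
  set δ := min (D ^ 2 - 1) 1
  have hδ : 0 < δ := lt_min (by nlinarith) one_pos
  have hp : p ≤ 0 := by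
    have : (5 : ℝ) ≤ n := by exact_mod_cast hn
    simp only [p, bubbleExp]; linarith
  have hdom := (integrable_one_add_sq_norm_rpow_bubbleExp_sq hn).const_mul ((c * δ ^ p) ^ 2)
  have hmeas : Measurable fun x : Pt n => x.1 i * x.1 j * bubbleWeight n K D (nsqT x.1) x.2 := by
    unfold bubbleWeight bubbleRadialDeriv bubbleBase nsqT; fun_prop
  refine hdom.integrableOn.mono' hmeas.aestronglyMeasurable ?_
  rw [ae_restrict_iff' (measurableSet_lt measurable_const measurable_snd)]
  refine .of_forall fun x (hx : 0 < x.2) => ?_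
  have hw := sub_one_add_sq_norm_le_bubbleBase hD hx
  have hlow : δ * (1 + ‖x‖ ^ 2) ≤ bubbleBase D (nsqT x.1) x.2 := by
    nlinarith [min_le_left (D ^ 2 - 1) 1, min_le_right (D ^ 2 - 1) 1, sq_nonneg ‖x‖]
  have hpos : 0 < δ * (1 + ‖x‖ ^ 2) := by positivity
  have hwp : bubbleBase D (nsqT x.1) x.2 ^ p ≤ δ ^ p * (1 + ‖x‖ ^ 2) ^ p := by
    rw [← Real.mul_rpow hδ.le (by positivity)]
    exact Real.rpow_le_rpow_of_nonpos hpos hlow hp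
  calc _ ≤ (c * bubbleBase D (nsqT x.1) x.2 ^ p) ^ 2 :=
        abs_coord_mul_coord_mul_bubbleWeight_le K hD i j hx
    _ ≤ (c * (δ ^ p * (1 + ‖x‖ ^ 2) ^ p)) ^ 2 := by
        rw [mul_pow, mul_pow c]
        gcongr
        exact Real.rpow_nonneg (hpos.trans_le hlow).le p
    _ = (c * δ ^ p) ^ 2 * ((1 + ‖x‖ ^ 2) ^ p) ^ 2 := by ring

theorem integrableOn_sum_bubbleWeight_and_setIntegral_eq_zero {n : ℕ} (hn : 5 ≤ n) (K : ℝ)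
    {D : ℝ} (hD : 1 < D) (B : Fin (n - 1) → Fin (n - 1) → ℝ) (hB : ∑ i, B i i = 0) :
    IntegrableOn
        (fun x : Pt n => ∑ i, ∑ j, B i j * (x.1 i * x.1 j * bubbleWeight n K D (nsqT x.1) x.2))
        {x | 0 < x.2} ∧
      ∫ x in {x : Pt n | 0 < x.2},
        ∑ i, ∑ j, B i j * (x.1 i * x.1 j * bubbleWeight n K D (nsqT x.1) x.2) = 0 := by
  have hterm (i j : Fin (n - 1)) : IntegrableOn
      (fun x : Pt n => B i j * (x.1 i * x.1 j * bubbleWeight n K D (nsqT x.1) x.2)) {x | 0 < x.2} :=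
    (integrableOn_coord_mul_coord_mul_bubbleWeight hn K hD i j).const_mul (B i j)
  have hrow (i : Fin (n - 1)) : IntegrableOn
      (fun x : Pt n => ∑ j, B i j * (x.1 i * x.1 j * bubbleWeight n K D (nsqT x.1) x.2))
      {x | 0 < x.2} :=
    integrable_finsetSum _ fun j _ => hterm i j
  refine ⟨integrable_finsetSum _ fun i _ => hrow i, ?_⟩
  rw [integral_finsetSum _ fun i _ => hrow i]
  simp_rw [integral_finsetSum _ fun j _ => hterm _ j, integral_const_mul]
  rw [volume_restrict_snd_pos]
  exact sum_mul_integral_coord_mul_coord_eq_zero (bubbleWeight n K D) B hB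

theorem stmt_19_general (n : ℕ) (hn : 5 ≤ n) (K D : ℝ) (hD : 1 < D)
    (A : Fin (n - 1) → Fin (n - 1) → Fin (n - 1) → Fin (n - 1) → ℝ)
    (B : Fin (n - 1) → Fin (n - 1) → ℝ)
    (hA1 : ∀ i k j l, A i k j l = -A k i j l)
    (hB2 : ∑ i, B i i = 0)
    (U : Pt n → ℝ) (hU : U = bubble n K D)
    (F : Pt n → ℝ)
    (hF : F = fun x : Pt n =>
      ∑ i, ∑ j,
        ((1 / 3) * (∑ k, ∑ l, A i k j l * x.1 k * x.1 l) + B i j * x.2 ^ 2) *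
          pdT i U x * pdT j U x) :
    IntegrableOn F {x : Pt n | 0 < x.2} ∧
    ∫ x in {x : Pt n | 0 < x.2}, F x = 0 := by
  have hS : MeasurableSet {x : Pt n | 0 < x.2} := measurableSet_lt measurable_const measurable_snd
  obtain ⟨hint, hzero⟩ := integrableOn_sum_bubbleWeight_and_setIntegral_eq_zero hn K hD B hB2
  have hFeq : Set.EqOn F
      (fun x => ∑ i, ∑ j, B i j * (x.1 i * x.1 j * bubbleWeight n K D (nsqT x.1) x.2))
      {x | 0 < x.2} := by
    intro x (hx : 0 < x.2)
    have hw : bubbleBase D (nsqT x.1) x.2 ≠ 0 := by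
      nlinarith [sub_one_add_sq_norm_le_bubbleBase hD hx, sq_nonneg ‖x‖]
    simp only [hF, hU, pdT_bubble K D _ hw]
    exact sum_gradient_form_eq A hA1 B x.1 _ _
  exact ⟨hint.congr_fun hFeq.symm hS, by rw [setIntegral_congr_fun hS hFeq, hzero]⟩

/-- under the curvature symmetry hypotheses on `A` and `B`, the
second-order term in the expansion of the gradient energy of the bubble
vanishes:
`∫_{ℝⁿ₊} Σᵢⱼ [ (1/3) Σₖₗ Aᵢₖⱼₗ xₖ xₗ + Bᵢⱼ xₙ² ] ∂ᵢU ∂ⱼU dx = 0`,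
the integrand being absolutely integrable. -/
theorem stmt_19 (n : ℕ) (hn : 5 ≤ n) (K D : ℝ) (hK : K < 0) (hD : 1 < D)
    (A : Fin (n - 1) → Fin (n - 1) → Fin (n - 1) → Fin (n - 1) → ℝ)
    (B : Fin (n - 1) → Fin (n - 1) → ℝ)
    (hA1 : ∀ i k j l, A i k j l = -A k i j l)
    (hA2 : ∀ i k j l, A i k j l = -A i k l j)
    (hA3 : ∀ i k j l, A i k j l = A j l i k)
    (hA4 : ∀ k l, ∑ i, A i k i l = 0)
    (hB1 : ∀ i j, B i j = B j i)
    (hB2 : ∑ i, B i i = 0)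
    (U : Pt n → ℝ) (hU : U = bubble n K D)
    (F : Pt n → ℝ)
    (hF : F = fun x : Pt n =>
      ∑ i, ∑ j,
        ((1 / 3) * (∑ k, ∑ l, A i k j l * x.1 k * x.1 l) + B i j * x.2 ^ 2) *
          pdT i U x * pdT j U x) :
    IntegrableOn F {x : Pt n | 0 < x.2} ∧
    ∫ x in {x : Pt n | 0 < x.2}, F x = 0 :=
  stmt_19_general n hn K D hD A B hA1 hB2 U hU F hF
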